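/- For every integer n with 0 ≤ n ≤ l−1, the quotient I^n/I^{n+1} is a free abelian group of rank n+1. -/

import Mathlib

open MvPolynomial

set_option maxHeartbeats 800000
set_option synthInstance.maxHeartbeats 200000

noncomputable section

/-- `A = ℤ[x,y]/(x^l − y^l)`, with `x = X 0`, `y = X 1`. -/
def IA (l : ℕ) : Ideal (MvPolynomial (Fin 2) ℤ) := Ideal.span {X 0 ^ l - X 1 ^ l}

/-- `B = ℤ[x,t]/(t^l − 1)`, with `x = X 0`, `t = X 1`. -/
def IB (l : ℕ) : Ideal (MvPolynomial (Fin 2) ℤ) := Ideal.span {X 1 ^ l - 1}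

abbrev Aq (l : ℕ) := MvPolynomial (Fin 2) ℤ ⧸ IA l
abbrev Bq (l : ℕ) := MvPolynomial (Fin 2) ℤ ⧸ IB l

/-- The class of `x` in `A`. -/
def xA (l : ℕ) : Aq l := Ideal.Quotient.mk (IA l) (X 0)
/-- The class of `y` in `A`. -/
def yA (l : ℕ) : Aq l := Ideal.Quotient.mk (IA l) (X 1)
/-- The class of `x` in `B`. -/
def xB (l : ℕ) : Bq l := Ideal.Quotient.mk (IB l) (X 0)
/-- The class of `t` in `B`. -/
def tB (l : ℕ) : Bq l := Ideal.Quotient.mk (IB l) (X 1)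

lemma tB_pow (l : ℕ) : tB l ^ l = 1 := by
  have h : (X 1 ^ l - 1 : MvPolynomial (Fin 2) ℤ) ∈ IB l := Ideal.subset_span rfl
  have h2 : Ideal.Quotient.mk (IB l) (X 1 ^ l - 1) = 0 :=
    Ideal.Quotient.eq_zero_iff_mem.mpr h
  have h3 : tB l ^ l - 1 = 0 := by
    rw [tB, ← map_pow, ← map_one (Ideal.Quotient.mk (IB l)), ← map_sub]
    simpa using h2
  exact sub_eq_zero.mp h3

/-- The diagonal ring homomorphism `Δ : A → B`, determined by `x ↦ x`, `y ↦ t·x`. -/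
def Δmap (l : ℕ) : Aq l →+* Bq l :=
  Ideal.Quotient.lift (IA l) ((aeval ![xB l, tB l * xB l]).toRingHom)
    (by
      intro p hp
      obtain ⟨c, rfl⟩ := Ideal.mem_span_singleton'.mp hp
      have key : (aeval ![xB l, tB l * xB l]) (X 0 ^ l - X 1 ^ l : MvPolynomial (Fin 2) ℤ) = 0 := by
        simp [mul_pow, tB_pow l]
      simp only [AlgHom.toRingHom_eq_coe, RingHom.coe_coe, map_mul, key, mul_zero])

lemma Δmap_xA (l : ℕ) : Δmap l (xA l) = xB l := by
  simp [Δmap, xA]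

lemma Δmap_yA (l : ℕ) : Δmap l (yA l) = tB l * xB l := by
  simp [Δmap, yA]

/-- The ideal `I = (x, y) ⊆ A`. -/
def Iid (l : ℕ) : Ideal (Aq l) := Ideal.span {xA l, yA l}

/-! Since `x^l − y^l` lies in `(x, y)^(n+1)` for `n < l`, the quotient map `ℤ[x,y] → A` induces
an isomorphism between the `n`-th graded pieces of the `(x, y)`-adic filtrations. In `ℤ[x,y]` that
graded piece is the group of homogeneous polynomials of degree `n`, which is free on the `n + 1`
monomials `x^a y^(n-a)`. -/

namespace Ideal

variable {R : Type*} [CommRing R]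

abbrev gradedPiece (I : Ideal R) (n : ℕ) : Type _ :=
  ↥(I ^ n) ⧸ Submodule.comap (I ^ n).subtype (I ^ (n + 1))

variable (J K : Ideal R) (n : ℕ)

def toGradedPieceMapMk : ↥(J ^ n) →ₗ[R] (J.map (Quotient.mk K)).gradedPiece n where
  toFun p := Submodule.Quotient.mk ⟨Quotient.mk K p, by
    rw [← Ideal.map_pow]; exact mem_map_of_mem _ p.2⟩
  map_add' p q := by
    rw [← Submodule.Quotient.mk_add]; rfl
  map_smul' r p := by
    rw [RingHom.id_apply, ← Submodule.Quotient.mk_smul]; rfl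

theorem toGradedPieceMapMk_surjective : Function.Surjective (J.toGradedPieceMapMk K n) := by
  rintro ⟨⟨v, hv⟩⟩
  rw [← Ideal.map_pow, mem_map_iff_of_surjective _ Quotient.mk_surjective] at hv
  obtain ⟨p, hp, rfl⟩ := hv
  exact ⟨⟨p, hp⟩, rfl⟩

theorem ker_toGradedPieceMapMk (hK : K ≤ J ^ (n + 1)) :
    LinearMap.ker (J.toGradedPieceMapMk K n) =
      (Submodule.comap (J ^ n).subtype (J ^ (n + 1))).restrictScalars R := by
  ext p
  simp only [LinearMap.mem_ker, toGradedPieceMapMk, LinearMap.coe_mk, AddHom.coe_mk,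
    Submodule.Quotient.mk_eq_zero, Submodule.mem_comap, Submodule.subtype_apply,
    Submodule.restrictScalars_mem]
  rw [← Ideal.map_pow, ← mem_comap, comap_map_mk hK]

def gradedPieceMapMkEquiv (hK : K ≤ J ^ (n + 1)) :
    (J.map (Quotient.mk K)).gradedPiece n ≃ₗ[R] J.gradedPiece n :=
  ((Submodule.quotEquivOfEq _ _ (J.ker_toGradedPieceMapMk K n hK).symm).trans
    ((J.toGradedPieceMapMk K n).quotKerEquivOfSurjective
      (J.toGradedPieceMapMk_surjective K n))).symm

end Ideal

namespace MvPolynomial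

variable {σ S : Type*} [CommRing S] (n : ℕ)

def homogeneousComponentOnPowIdealOfVars :
    ↥(idealOfVars σ S ^ n) →ₗ[S] homogeneousSubmodule σ S n where
  toFun p := ⟨homogeneousComponent n p.1, homogeneousComponent_mem n p.1⟩
  map_add' p q := by ext1; exact map_add _ _ _
  map_smul' r p := by ext1; exact map_smul _ _ _

theorem homogeneousComponentOnPowIdealOfVars_surjective :
    Function.Surjective (homogeneousComponentOnPowIdealOfVars (σ := σ) (S := S) n) := by
  rintro ⟨h, hh⟩
  have hJ : h ∈ idealOfVars σ S ^ n := by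
    rw [mem_pow_idealOfVars_iff]
    intro d hd
    rw [Finsupp.degree_eq_weight_one]
    exact (hh (mem_support_iff.mp hd)).ge
  exact ⟨⟨h, hJ⟩, Subtype.ext (homogeneousComponent_eq_self hh)⟩

theorem ker_homogeneousComponentOnPowIdealOfVars :
    LinearMap.ker (homogeneousComponentOnPowIdealOfVars (σ := σ) (S := S) n) =
      (Submodule.comap (idealOfVars σ S ^ n).subtype
        (idealOfVars σ S ^ (n + 1))).restrictScalars S := by
  ext ⟨p, hp⟩
  rw [mem_pow_idealOfVars_iff'] at hp
  simp only [LinearMap.mem_ker, Submodule.restrictScalars_mem, Submodule.mem_comap,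
    Submodule.subtype_apply, mem_pow_idealOfVars_iff']
  constructor
  · intro h d hd
    rcases Nat.lt_succ_iff_lt_or_eq.mp hd with hlt | rfl
    · exact hp d hlt
    · simpa using (coeff_homogeneousComponent _ p d).symm.trans
        (congrArg (coeff d ∘ Subtype.val) h)
  · intro h
    ext1
    ext d
    change coeff d (homogeneousComponent n p) = 0
    rw [coeff_homogeneousComponent, ite_eq_right_iff]
    exact fun hd => h d (by omega)

def gradedPieceIdealOfVarsEquiv :
    (idealOfVars σ S).gradedPiece n ≃ₗ[S] ({d : σ →₀ ℕ | d.degree = n} →₀ S) :=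
  (Submodule.Quotient.restrictScalarsEquiv S _).symm ≪≫ₗ
    Submodule.quotEquivOfEq _ _ (ker_homogeneousComponentOnPowIdealOfVars n).symm ≪≫ₗ
    (homogeneousComponentOnPowIdealOfVars n).quotKerEquivOfSurjective
      (homogeneousComponentOnPowIdealOfVars_surjective n) ≪≫ₗ
    LinearEquiv.ofEq _ _ (homogeneousSubmodule_eq_finsupp_supported σ S n) ≪≫ₗ
    AddMonoidAlgebra.supportedEquivFinsupp _

end MvPolynomial

def Finsupp.degreeEqEquivSym (σ : Type*) [DecidableEq σ] (n : ℕ) :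
    {d : σ →₀ ℕ | d.degree = n} ≃ Sym σ n :=
  ((Sym.equivNatSum σ n).trans (Equiv.subtypeEquivRight fun _ => Iff.rfl)).symm

def Finsupp.degreeEqFinTwoEquivFin (n : ℕ) :
    {d : Fin 2 →₀ ℕ | d.degree = n} ≃ Fin (n + 1) :=
  (Finsupp.degreeEqEquivSym (Fin 2) n).trans <| Fintype.equivFinOfCardEq <| by
    rw [Sym.card_sym_fin_eq_multichoose, Nat.multichoose_two]

theorem Iid_eq_map_idealOfVars (l : ℕ) :
    Iid l = (idealOfVars (Fin 2) ℤ).map (Ideal.Quotient.mk (IA l)) := by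
  rw [idealOfVars, Ideal.map_span, ← Set.range_comp, Iid]
  congr 1
  ext
  simp [Fin.exists_fin_two, xA, yA, eq_comm]

theorem IA_le_pow_idealOfVars {l n : ℕ} (hn : n ≤ l - 1) :
    IA l ≤ idealOfVars (Fin 2) ℤ ^ (n + 1) := by
  rw [IA, Ideal.span_singleton_le_iff_mem]
  rcases Nat.eq_zero_or_pos l with rfl | hl
  · simp
  · have hX : ∀ i, (X i : MvPolynomial (Fin 2) ℤ) ∈ idealOfVars (Fin 2) ℤ :=
      fun i => Ideal.subset_span ⟨i, rfl⟩
    exact Ideal.pow_le_pow_right (by omega)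
      (sub_mem (Ideal.pow_mem_pow (hX 0) l) (Ideal.pow_mem_pow (hX 1) l))

theorem stmt_16_general (l : ℕ) (n : ℕ) (hn : n ≤ l - 1) :
    Nonempty ((↥(Iid l ^ n) ⧸ Submodule.comap (Iid l ^ n).subtype (Iid l ^ (n + 1))) ≃+
      (Fin (n + 1) → ℤ)) := by
  rw [Iid_eq_map_idealOfVars]
  exact ⟨((idealOfVars (Fin 2) ℤ).gradedPieceMapMkEquiv (IA l) n
      (IA_le_pow_idealOfVars hn)).toAddEquiv.trans
    (MvPolynomial.gradedPieceIdealOfVarsEquiv n ≪≫ₗ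
      Finsupp.domLCongr (Finsupp.degreeEqFinTwoEquivFin n) ≪≫ₗ
      Finsupp.linearEquivFunOnFinite ℤ ℤ (Fin (n + 1))).toAddEquiv⟩

/-- For every `0 ≤ n ≤ l−1`, the quotient `I^n/I^{n+1}` is a free abelian group of rank
`n+1`. -/
theorem stmt_16 (l : ℕ) (hl : 1 ≤ l) (n : ℕ) (hn : n ≤ l - 1) :
    Nonempty ((↥(Iid l ^ n) ⧸ Submodule.comap (Iid l ^ n).subtype (Iid l ^ (n + 1))) ≃+
      (Fin (n + 1) → ℤ)) :=
  stmt_16_general l n hn
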